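/- arXiv:1301.3979 — 5 statements merged into one kernel-verified Lean document; each statement's English description precedes it below -/
import Mathlib

section
/- Every finite cograph G satisfies χ(G) = ω(G); in particular, since the class of cographs is hereditary, every induced subgraph of a cograph G satisfies χ = ω, i.e. cographs are perfect. -/
/-!
A cograph on at least two vertices is disconnected or has disconnected complement (Seinsche).
Otherwise pick a vertex `x` whose removal keeps `G` connected; by induction `Gᶜ - x` is then
disconnected. But in a connected graph with connected complement, removing a vertex `x` cannot
disconnect it: a non-neighbour `y` of `x` shares its component of `G - x` with some neighbour of
`x`, so that component has an edge `b a` with `b ≁ x ∼ a`, and a neighbour `c` of `x` in another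
component yields the induced path `b a x c`. Applied to the cograph `Gᶜ`, this is a contradiction.

So a cograph splits into parts with no edges between them, or into two parts joined by all
edges. By induction each part `P` is `ω(P)`-colourable; in the first case `G` is
`max ω(P)`-colourable and in the second `ω(A) + ω(B)`-colourable, and both are at most `ω(G)`.
-/

/-- A cograph: a simple graph with no induced subgraph isomorphic to the path `P₄`
on four vertices. -/
def SimpleGraph.IsCograph {α : Type*} (G : SimpleGraph α) : Prop :=
  IsEmpty (SimpleGraph.pathGraph 4 ↪g G)

namespace SimpleGraph

variable {α β : Type*} {G : SimpleGraph α} {H : SimpleGraph β}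

def Embedding.compl (f : H ↪g G) : Hᶜ ↪g Gᶜ :=
  ⟨f.toEmbedding, by simp [f.injective.ne_iff]⟩

def pathGraphFourIsoCompl : pathGraph 4 ≃g (pathGraph 4)ᶜ :=
  ⟨⟨![1, 3, 0, 2], ![2, 0, 3, 1], by decide, by decide⟩, fun {a b} => by
    fin_cases a <;> fin_cases b <;> simp [pathGraph_adj]⟩

theorem compl_induce (s : Set α) : (G.induce s)ᶜ = Gᶜ.induce s := by
  ext
  simp [Subtype.ext_iff]

theorem Walk.exists_adj_reachable_induce_compl_singleton {x y : α} (p : G.Walk y x)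
    (hy : y ≠ x) :
    ∃ a, ∃ ha : a ≠ x, G.Adj x a ∧ (G.induce {x}ᶜ).Reachable ⟨y, hy⟩ ⟨a, ha⟩ := by
  induction p with
  | nil => exact absurd rfl hy
  | @cons y z x h p ih =>
    by_cases hz : z = x
    · subst hz
      exact ⟨y, hy, h.symm, .rfl⟩
    · obtain ⟨a, ha, hxa, hza⟩ := ih hz
      exact ⟨a, ha, hxa, (induce_adj.2 h).reachable.trans hza⟩

theorem Walk.exists_reachable_adj_of_not_of {P : α → Prop} {u v : α} (p : G.Walk u v)
    (hu : ¬P u) (hv : P v) : ∃ b a, G.Reachable u b ∧ G.Adj b a ∧ ¬P b ∧ P a := by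
  induction p with
  | nil => exact absurd hv hu
  | @cons u w v h p ih =>
    by_cases hw : P w
    · exact ⟨u, w, .rfl, h, hu, hw⟩
    · obtain ⟨b, a, hwb, hba, hb, ha⟩ := ih hw hv
      exact ⟨b, a, h.reachable.trans hwb, hba, hb, ha⟩

theorem exists_notMem_supp_of_not_preconnected (h : ¬G.Preconnected) (c : G.ConnectedComponent) :
    ∃ v, v ∉ c.supp := by
  by_contra! hc
  exact h fun u v => c.reachable_of_mem_supp (hc u) (hc v)

theorem adj_of_mem_supp_compl_of_notMem {c : Gᶜ.ConnectedComponent} {a b : α} (ha : a ∈ c.supp)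
    (hb : b ∉ c.supp) : G.Adj a b := by
  by_contra hab
  have hne : a ≠ b := by rintro rfl; exact hb ha
  exact hb (c.mem_supp_of_adj_mem_supp ha ((compl_adj ..).2 ⟨hne, hab⟩))

theorem colorable_add_of_induce (A : Set α) {m n : ℕ} (h₁ : (G.induce A).Colorable m)
    (h₂ : (G.induce Aᶜ).Colorable n) : G.Colorable (m + n) := by
  classical
  obtain ⟨c₁⟩ := h₁
  obtain ⟨c₂⟩ := h₂
  let c : G.Coloring (Fin m ⊕ Fin n) := Coloring.mk
    (fun v => if hv : v ∈ A then .inl (c₁ ⟨v, hv⟩) else .inr (c₂ ⟨v, hv⟩))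
    (fun {v w} hvw => by
      by_cases hv : v ∈ A <;> by_cases hw : w ∈ A <;> simp only [hv, hw, dite_true, dite_false]
      · exact fun h => c₁.valid (induce_adj.2 hvw) (Sum.inl_injective h)
      · exact Sum.inl_ne_inr
      · exact Sum.inr_ne_inl
      · exact fun h => c₂.valid (induce_adj.2 hvw) (Sum.inr_injective h))
  simpa using c.colorable

theorem cliqueNum_induce_add_cliqueNum_induce_compl_le [Finite α] {A : Set α}
    (hA : ∀ a ∈ A, ∀ b ∉ A, G.Adj a b) :
    (G.induce A).cliqueNum + (G.induce Aᶜ).cliqueNum ≤ G.cliqueNum := by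
  classical
  obtain ⟨s, hs⟩ := (G.induce A).exists_isNClique_cliqueNum
  obtain ⟨t, ht⟩ := (G.induce Aᶜ).exists_isNClique_cliqueNum
  rw [isNClique_induce_iff] at hs ht
  set s' := s.map (.subtype _)
  set t' := t.map (.subtype _)
  have hs' : ∀ a ∈ s', a ∈ A := by simp +contextual [s']
  have ht' : ∀ b ∈ t', b ∉ A := by simp +contextual [t']
  have hdisj : Disjoint s' t' := Finset.disjoint_left.2 fun a ha hat => ht' a hat (hs' a ha)
  have hclique : G.IsClique (s' ∪ t' : Finset α) := by
    rw [Finset.coe_union, IsClique, Set.pairwise_union]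
    refine ⟨hs.isClique, ht.isClique, fun a ha b hb _ => ?_⟩
    have hab := hA a (hs' a ha) b (ht' b hb)
    exact ⟨hab, hab.symm⟩
  calc (G.induce A).cliqueNum + (G.induce Aᶜ).cliqueNum = (s' ∪ t').card := by
        rw [Finset.card_union_of_disjoint hdisj, hs.card_eq, ht.card_eq]
    _ ≤ G.cliqueNum := hclique.card_le_cliqueNum

theorem not_isCograph_of_induced_path {a b c d : α} (hab : G.Adj a b) (hbc : G.Adj b c)
    (hcd : G.Adj c d) (hac : ¬G.Adj a c) (had : ¬G.Adj a d) (hbd : ¬G.Adj b d) :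
    ¬G.IsCograph := by
  have hinj : Function.Injective ![a, b, c, d] := by
    intro i j hij
    fin_cases i <;> fin_cases j <;> simp at hij ⊢ <;> subst_vars <;> simp_all [G.adj_comm]
  refine fun h => h.false ⟨⟨_, hinj⟩, fun {i j} => ?_⟩
  fin_cases i <;> fin_cases j <;> simp [pathGraph_adj, G.adj_comm, *]

namespace IsCograph

theorem of_embedding (hG : G.IsCograph) (f : H ↪g G) : H.IsCograph :=
  ⟨fun g => hG.false (f.comp g)⟩

theorem induce (hG : G.IsCograph) (s : Set α) : (G.induce s).IsCograph :=
  hG.of_embedding (Embedding.induce s)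

theorem of_compl (hG : Gᶜ.IsCograph) : G.IsCograph :=
  ⟨fun f => hG.false (f.compl.comp pathGraphFourIsoCompl.toEmbedding)⟩

theorem compl (hG : G.IsCograph) : Gᶜ.IsCograph :=
  of_compl (by rwa [compl_compl])

theorem preconnected_induce_compl_singleton (hG : G.IsCograph) (hconn : G.Preconnected)
    (hconnc : Gᶜ.Preconnected) (x : α) : (G.induce {x}ᶜ).Preconnected := by
  set H := G.induce {x}ᶜ
  by_contra hH
  obtain ⟨u, v, huv⟩ : ∃ u v, ¬H.Reachable u v := by simpa [Preconnected] using hH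
  have : Nontrivial α := nontrivial_of_ne _ _ u.2
  obtain ⟨y, hxy⟩ := hconnc.exists_adj_of_nontrivial x
  rw [compl_adj] at hxy
  set y' : ({x}ᶜ : Set α) := ⟨y, hxy.1.symm⟩
  obtain ⟨z, hyz⟩ : ∃ z, ¬H.Reachable y' z := by
    by_cases hyu : H.Reachable y' u
    · exact ⟨v, fun hyv => huv (hyu.symm.trans hyv)⟩
    · exact ⟨u, hyu⟩
  have hsep : ∀ d e, H.Reachable y' d → H.Reachable z e → ¬G.Adj d e := fun d e hd he hde =>
    hyz (hd.trans ((induce_adj.2 hde).reachable.trans he.symm))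
  obtain ⟨a', ha', hxa', hya'⟩ := (hconn y x).some.exists_adj_reachable_induce_compl_singleton
    hxy.1.symm
  obtain ⟨c, hc, hxc, hzc⟩ := (hconn z x).some.exists_adj_reachable_induce_compl_singleton z.2
  obtain ⟨b, a, hyb, hba, hxb, hxa⟩ :=
    hya'.some.exists_reachable_adj_of_not_of (P := fun w : ({x}ᶜ : Set α) => G.Adj x w)
      hxy.2 hxa'
  exact not_isCograph_of_induced_path (induce_adj.1 hba) hxa.symm hxc (fun h => hxb h.symm)
    (hsep _ _ hyb hzc) (hsep _ _ (hyb.trans hba.reachable) hzc) hG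

theorem not_preconnected_or_not_preconnected_compl [Finite α] [Nontrivial α]
    (hG : G.IsCograph) : ¬G.Preconnected ∨ ¬Gᶜ.Preconnected := by
  revert ‹Nontrivial α›
  induction α using Finite.induction_subsingleton_or_nontrivial with
  | hbase α => exact (not_nontrivial α ‹_›).elim
  | hstep α ih =>
    intro _
    rw [← not_and_or]
    rintro ⟨hconn, hconnc⟩
    obtain ⟨x, hx⟩ := Connected.exists_preconnected_induce_compl_singleton_of_finite ⟨hconn⟩
    have hxc : (G.induce {x}ᶜ)ᶜ.Preconnected := by
      rw [compl_induce]
      exact hG.compl.preconnected_induce_compl_singleton hconnc (by rwa [compl_compl]) x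
    rcases subsingleton_or_nontrivial ({x}ᶜ : Set α) with hs | hs
    · obtain ⟨a, ha⟩ := hconn.exists_adj_of_nontrivial x
      obtain ⟨b, hb⟩ := hconnc.exists_adj_of_nontrivial x
      obtain rfl : a = b := congrArg Subtype.val (hs.elim ⟨a, ha.ne'⟩ ⟨b, hb.ne'⟩)
      exact ((compl_adj ..).1 hb).2 ha
    · exact (ih _ (Finite.card_subtype_lt (x := x) (by simp)) (hG.induce _)).elim (· hx) (· hxc)

theorem colorable_cliqueNum [Finite α] (hG : G.IsCograph) : G.Colorable G.cliqueNum := by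
  induction α using Finite.induction_subsingleton_or_nontrivial with
  | hbase α =>
    have := Fintype.ofFinite α
    have hclique : G.IsClique (Finset.univ : Finset α) :=
      .of_subsingleton Set.subsingleton_of_subsingleton
    exact G.colorable_of_fintype.mono (IsClique.card_le_cliqueNum (tc := hclique))
  | hstep α ih =>
    have ih' : ∀ s : Set α, ∀ x ∉ s, (G.induce s).Colorable (G.induce s).cliqueNum :=
      fun s x hx => ih s (Finite.card_subtype_lt hx) (hG.induce s)
    rcases hG.not_preconnected_or_not_preconnected_compl with h | h
    · refine colorable_iff_forall_connectedComponent.2 fun c => ?_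
      obtain ⟨v, hv⟩ := exists_notMem_supp_of_not_preconnected h c
      exact (ih' _ v hv).mono (G.cliqueNum_induce_le _)
    · let c := Gᶜ.connectedComponentMk (Classical.arbitrary α)
      obtain ⟨u, hu⟩ := c.nonempty_supp
      obtain ⟨v, hv⟩ := exists_notMem_supp_of_not_preconnected h c
      exact (colorable_add_of_induce _ (ih' _ v hv) (ih' _ u (by simpa))).mono
        (cliqueNum_induce_add_cliqueNum_induce_compl_le fun a ha b hb =>
          adj_of_mem_supp_compl_of_notMem ha hb)

theorem cliqueNum_eq_chromaticNumber [Finite α] (hG : G.IsCograph) :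
    (G.cliqueNum : ℕ∞) = G.chromaticNumber :=
  le_antisymm G.cliqueNum_le_chromaticNumber hG.colorable_cliqueNum.chromaticNumber_le

end IsCograph

end SimpleGraph

/-- Every finite cograph satisfies `χ = ω`, and (since cographs are hereditary) so does
every induced subgraph: cographs are perfect. -/
theorem cograph_perfect {α : Type*} [Fintype α] (G : SimpleGraph α) (hG : G.IsCograph) :
    (G.cliqueNum : ℕ∞) = G.chromaticNumber ∧
    ∀ s : Set α, ((G.induce s).cliqueNum : ℕ∞) = (G.induce s).chromaticNumber :=
  ⟨hG.cliqueNum_eq_chromaticNumber, fun s => (hG.induce s).cliqueNum_eq_chromaticNumber⟩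
end

section
/- Let G and H be finite cographs with H nonempty. Then there exists a graph homomorphism from G to H if and only if ω(G) ≤ ω(H). -/
/-!
Cographs are perfect. If `I` is a maximum independent set and `K` a clique avoiding it, every
vertex of `K` has a neighbour in `I`; a vertex `a ∈ I` with the most neighbours in `K` is then
adjacent to all of `K`, since otherwise `a` misses some `u ∈ K`, a neighbour `b ∈ I` of `u`
misses some neighbour `v ∈ K` of `a`, and `a - v - u - b` is an induced `P₄`. Hence removing `I`
lowers the clique number, and induction colours `G` with `ω(G)` colours. Composing such a
colouring with an embedding of the complete graph on `ω(H) ≥ ω(G)` vertices gives `G →g H`;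
conversely a homomorphism is injective on cliques.
-/

open Finset

namespace SimpleGraph

variable {α β : Type*} {G : SimpleGraph α} {H : SimpleGraph β}

theorem IsCograph.adj_of_adj_of_adj_of_adj (hG : G.IsCograph) {a b c d : α}
    (hab : G.Adj a b) (hbc : G.Adj b c) (hcd : G.Adj c d) (hac : ¬G.Adj a c)
    (hbd : ¬G.Adj b d) : G.Adj a d := by
  by_contra had
  have hac' : a ≠ c := by rintro rfl; exact had hcd
  have hbd' : b ≠ d := by rintro rfl; exact had hab
  have had' : a ≠ d := by rintro rfl; exact hbd hab.symm
  have hinj : Function.Injective ![a, b, c, d] := by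
    intro i j hij
    fin_cases i <;> fin_cases j <;>
      simp_all [hab.ne, hbc.ne, hcd.ne, hab.ne.symm, hbc.ne.symm, hcd.ne.symm, hac'.symm,
        hbd'.symm, had'.symm]
  have hca : ¬G.Adj c a := fun h => hac h.symm
  have hdb : ¬G.Adj d b := fun h => hbd h.symm
  have hda : ¬G.Adj d a := fun h => had h.symm
  refine hG.false ⟨⟨![a, b, c, d], hinj⟩, fun {i j} => ?_⟩
  fin_cases i <;> fin_cases j <;>
    simp [pathGraph_adj, hab, hbc, hcd, hab.symm, hbc.symm, hcd.symm, hac, hbd, had, hca, hdb,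
      hda]

theorem Hom.cliqueNum_le [Finite β] (f : G →g H) : G.cliqueNum ≤ H.cliqueNum := by
  obtain ⟨s, hs⟩ := G.exists_isNClique_cliqueNum
  let e := f.comp (topEmbeddingOfNotCliqueFree hs.not_cliqueFree).toHom
  have h : ¬H.CliqueFree G.cliqueNum :=
    IsContained.not_cliqueFree ⟨e.toCopy e.injective_of_top_hom⟩
  obtain ⟨t, ht⟩ := not_forall_not.mp h
  exact ht.card_eq ▸ ht.isClique.card_le_cliqueNum

theorem Colorable.nonempty_hom_of_le_cliqueNum {n : ℕ} (hG : G.Colorable n)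
    (hn : n ≤ H.cliqueNum) : Nonempty (G →g H) := by
  obtain ⟨s, hs⟩ := H.exists_isNClique_cliqueNum
  exact ⟨(topEmbeddingOfNotCliqueFree hs.not_cliqueFree).toHom.comp (hG.mono hn).some⟩

theorem IsCograph.exists_isClique_insert (hG : G.IsCograph) {K I : Finset α}
    (hK : G.IsClique (K : Set α)) (hI : G.IsIndepSet (I : Set α)) (hI₀ : I.Nonempty)
    (hKI : ∀ u ∈ K, ∃ b ∈ I, G.Adj u b) : ∃ a ∈ I, G.IsClique (insert a (K : Set α)) := by
  classical
  obtain ⟨a, haI, hmax⟩ := I.exists_max_image (fun x => #{v ∈ K | G.Adj x v}) hI₀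
  refine ⟨a, haI, hK.insert fun u huK _ => ?_⟩
  by_contra hau
  obtain ⟨b, hbI, hub⟩ := hKI u huK
  -- `a` has at least as many neighbours in `K` as `b`, but `u` is a neighbour of `b` only
  obtain ⟨v, hvK, hav, hbv⟩ : ∃ v ∈ K, G.Adj a v ∧ ¬G.Adj b v := by
    by_contra! h
    have hsub : {v ∈ K | G.Adj a v} ⊂ {v ∈ K | G.Adj b v} :=
      (ssubset_iff_of_subset fun v hv => by
        rw [mem_filter] at hv ⊢; exact ⟨hv.1, h v hv.1 hv.2⟩).2
        ⟨u, mem_filter.2 ⟨huK, hub.symm⟩, fun hu => hau (mem_filter.1 hu).2⟩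
    exact (hmax b hbI).not_gt (card_lt_card hsub)
  have hab : a ≠ b := by rintro rfl; exact hau hub.symm
  have hvu : v ≠ u := by rintro rfl; exact hau hav
  exact hI haI hbI hab <|
    hG.adj_of_adj_of_adj_of_adj hav (hK hvK huK hvu) hub hau fun h => hbv h.symm

theorem IsCograph.exists_isIndepSet_sdiff_clique_card_le [DecidableEq α] (hG : G.IsCograph)
    {n : ℕ} {s : Finset α} (hs : ∀ t ⊆ s, G.IsClique (t : Set α) → #t ≤ n + 1) :
    ∃ I ⊆ s, G.IsIndepSet (I : Set α) ∧ ∀ t ⊆ s \ I, G.IsClique (t : Set α) → #t ≤ n := by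
  classical
  obtain ⟨I, hI, hmax⟩ := Finset.exists_max_image
    (s.powerset.filter fun J : Finset α => G.IsIndepSet (J : Set α)) card ⟨∅, by simp⟩
  obtain ⟨hIs, hIind⟩ := by simpa using hI
  have hdom : ∀ u ∈ s \ I, ∃ b ∈ I, G.Adj u b := by
    intro u hu
    rw [mem_sdiff] at hu
    by_contra! h
    have hins : G.IsIndepSet (insert u I : Finset α) := by
      rw [coe_insert, ← isClique_compl]
      exact ((isClique_compl G).2 hIind).insert fun b hb hub => ⟨hub, h b hb⟩
    have := hmax (insert u I) (by simpa [insert_subset_iff, hu.1, hIs] using hins)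
    rw [card_insert_of_notMem hu.2] at this
    omega
  refine ⟨I, hIs, hIind, fun t ht htc => ?_⟩
  obtain rfl | ht₀ := t.eq_empty_or_nonempty
  · simp
  obtain ⟨u, hu⟩ := ht₀
  obtain ⟨b, hbI, -⟩ := hdom u (ht hu)
  obtain ⟨a, haI, hat⟩ := hG.exists_isClique_insert htc hIind ⟨b, hbI⟩ fun v hv => hdom v (ht hv)
  have ha : a ∉ t := fun h => (mem_sdiff.1 (ht h)).2 haI
  have := hs (insert a t) (insert_subset (hIs haI) (ht.trans sdiff_subset)) (by simpa using hat)
  rw [card_insert_of_notMem ha] at this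
  omega

theorem IsCograph.exists_coloring_of_clique_card_le (hG : G.IsCograph) (n : ℕ) (s : Finset α)
    (hs : ∀ t ⊆ s, G.IsClique (t : Set α) → #t ≤ n) :
    ∃ f : α → ℕ, (∀ x ∈ s, f x < n) ∧ ∀ x ∈ s, ∀ y ∈ s, G.Adj x y → f x ≠ f y := by
  classical
  induction n generalizing s with
  | zero =>
    have hs₀ : s = ∅ := eq_empty_of_forall_notMem fun x hx => by
      simpa using hs {x} (by simpa using hx) (by simp)
    exact ⟨0, by simp [hs₀], by simp [hs₀]⟩
  | succ n ih =>
    obtain ⟨I, hIs, hI, hsI⟩ := hG.exists_isIndepSet_sdiff_clique_card_le hs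
    obtain ⟨f, hf_lt, hf_adj⟩ := ih (s \ I) hsI
    refine ⟨fun x => if x ∈ I then n else f x, fun x hx => ?_, fun x hx y hy hxy => ?_⟩
    · by_cases hxI : x ∈ I <;> simp only [hxI, if_true, if_false]
      · omega
      · exact (hf_lt x (mem_sdiff.2 ⟨hx, hxI⟩)).trans (by omega)
    · by_cases hxI : x ∈ I <;> by_cases hyI : y ∈ I <;> simp only [hxI, hyI, if_true, if_false]
      · exact absurd hxy (hI hxI hyI (G.ne_of_adj hxy))
      · exact (hf_lt y (mem_sdiff.2 ⟨hy, hyI⟩)).ne'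
      · exact (hf_lt x (mem_sdiff.2 ⟨hx, hxI⟩)).ne
      · exact hf_adj x (mem_sdiff.2 ⟨hx, hxI⟩) y (mem_sdiff.2 ⟨hy, hyI⟩) hxy

theorem IsCograph.colorable_cliqueNum_s8 [Fintype α] (hG : G.IsCograph) :
    G.Colorable G.cliqueNum := by
  obtain ⟨f, hf_lt, hf_adj⟩ := hG.exists_coloring_of_clique_card_le G.cliqueNum univ
    fun t _ ht => ht.card_le_cliqueNum
  exact (colorable_iff_exists_bdd_nat_coloring _).2
    ⟨Coloring.mk f fun {x y} hxy => hf_adj x (mem_univ x) y (mem_univ y) hxy,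
      fun x => hf_lt x (mem_univ x)⟩

end SimpleGraph

theorem cograph_hom_iff_cliqueNum_le_general {α β : Type*} [Fintype α] [Fintype β]
    (G : SimpleGraph α) (H : SimpleGraph β) (hG : G.IsCograph) :
    Nonempty (G →g H) ↔ G.cliqueNum ≤ H.cliqueNum :=
  ⟨fun ⟨f⟩ => f.cliqueNum_le, hG.colorable_cliqueNum_s8.nonempty_hom_of_le_cliqueNum⟩

/-- Let `G` and `H` be finite cographs with `H` nonempty. Then there is a graph
homomorphism from `G` to `H` if and only if `ω(G) ≤ ω(H)`. -/
theorem cograph_hom_iff_cliqueNum_le {α β : Type*} [Fintype α] [Fintype β] [Nonempty β]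
    (G : SimpleGraph α) (H : SimpleGraph β) (hG : G.IsCograph) (hH : H.IsCograph) :
    Nonempty (G →g H) ↔ G.cliqueNum ≤ H.cliqueNum :=
  cograph_hom_iff_cliqueNum_le_general G H hG
end

section
/- Let G and H be finite cographs, let G be connected, and suppose H is a retract of G. Then H is connected, and if C_1, …, C_t are the cocomponents of G, there exists a partition of the set of cocomponents of H into t nonempty parts P_1, …, P_t such that, for each i ∈ {1,…,t}, the subgraph of H induced by the union of the cocomponents in P_i is a retract of the subgraph of G induced by C_i. -/
/-- `H` is a retract of `G`: there are homomorphisms `ρ : G → H` (retraction) and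
`γ : H → G` (co-retraction) with `ρ ∘ γ = id`. -/
def SimpleGraph.IsRetract {α β : Type*} (G : SimpleGraph α) (H : SimpleGraph β) : Prop :=
  ∃ (ρ : G →g H) (γ : H →g G), ∀ v, ρ (γ v) = v

/-!
A homomorphism never identifies two adjacent vertices, while two vertices in distinct
cocomponents are always adjacent. Since `ρ x = ρ (γ (ρ x))`, the vertices `x` and `γ (ρ x)` lie
in the same cocomponent of `G`. The co-retraction `γ` is an embedding, hence also a homomorphism
of the complements, so it maps cocomponents of `H` to cocomponents of `G`, and by the above this
map is surjective. Finally `ρ` and `γ` restrict to a retraction between each cocomponent `C` of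
`G` and the union of the cocomponents of `H` sent to `C`.
-/

namespace SimpleGraph

variable {α β : Type*} {G : SimpleGraph α} {H : SimpleGraph β}

theorem adj_of_connectedComponentMk_compl_ne {x y : α}
    (h : Gᶜ.connectedComponentMk x ≠ Gᶜ.connectedComponentMk y) : G.Adj x y := by
  by_contra hxy
  have hne : x ≠ y := fun hxy' => h (congrArg _ hxy')
  exact h (ConnectedComponent.sound ((G.compl_adj x y).2 ⟨hne, hxy⟩).reachable)

theorem Hom.connectedComponentMk_compl_eq_of_apply_eq (f : G →g H) {x y : α} (h : f x = f y) :
    Gᶜ.connectedComponentMk x = Gᶜ.connectedComponentMk y := by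
  by_contra hne
  exact (f.map_adj (adj_of_connectedComponentMk_compl_ne hne)).ne h

def Hom.toEmbeddingOfLeftInverse (γ : H →g G) (ρ : G →g H) (h : Function.LeftInverse ρ γ) :
    H ↪g G where
  toFun := γ
  inj' := h.injective
  map_rel_iff' {a b} := ⟨fun hab => h a ▸ h b ▸ ρ.map_adj hab, γ.map_adj⟩

section LeftInverse

variable {ρ : G →g H} {γ : H →g G}

theorem connectedComponentMk_compl_apply_apply (hργ : Function.LeftInverse ρ γ) (x : α) :
    Gᶜ.connectedComponentMk (γ (ρ x)) = Gᶜ.connectedComponentMk x :=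
  ρ.connectedComponentMk_compl_eq_of_apply_eq (hργ (ρ x))

theorem surjective_map_compl_toEmbeddingOfLeftInverse (hργ : Function.LeftInverse ρ γ) :
    Function.Surjective
      (ConnectedComponent.map (Embedding.complEquiv (γ.toEmbeddingOfLeftInverse ρ hργ)).toHom) :=
  fun C => C.ind fun x => ⟨Hᶜ.connectedComponentMk (ρ x),
    connectedComponentMk_compl_apply_apply hργ x⟩

theorem isRetract_induce_of_mapsTo (hργ : Function.LeftInverse ρ γ) {s : Set α} {t : Set β}
    (hρ : Set.MapsTo ρ s t) (hγ : Set.MapsTo γ t s) : (G.induce s).IsRetract (H.induce t) :=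
  ⟨induceHom ρ hρ, induceHom γ hγ, fun v => Subtype.ext (hργ v)⟩

end LeftInverse

end SimpleGraph

/-- The partition of the cocomponents of `H` is encoded by the surjection `P`: its parts are the
fibres of `P`. -/
theorem connected_cograph_retract_cocomponents_general {α β : Type*}
    (G : SimpleGraph α) (H : SimpleGraph β)
    (hGc : G.Connected) (h : G.IsRetract H) :
    H.Connected ∧
    ∃ P : Hᶜ.ConnectedComponent → Gᶜ.ConnectedComponent,
      Function.Surjective P ∧
      ∀ C : Gᶜ.ConnectedComponent,
        (G.induce C.supp).IsRetract
          (H.induce {w : β | P (Hᶜ.connectedComponentMk w) = C}) := by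
  obtain ⟨ρ, γ, hργ : Function.LeftInverse ρ γ⟩ := h
  refine ⟨hGc.map ρ hργ.surjective, _,
    SimpleGraph.surjective_map_compl_toEmbeddingOfLeftInverse hργ,
    fun C => SimpleGraph.isRetract_induce_of_mapsTo hργ (fun x hx => ?_) (fun w hw => hw)⟩
  exact (SimpleGraph.connectedComponentMk_compl_apply_apply hργ x).trans hx

/-- Let `G` and `H` be finite cographs with `G` connected, and suppose `H` is a retract of `G`.
Then `H` is connected, and there is a partition of the cocomponents of `H` (encoded by a
surjective map `P` from the cocomponents of `H`, i.e. the connected components of `Hᶜ`, onto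
the cocomponents of `G`: the parts are the fibres of `P`, nonempty by surjectivity) such that
for each cocomponent `C` of `G`, the subgraph of `H` induced by the union of the cocomponents
in the part assigned to `C` is a retract of the subgraph of `G` induced by `C`. -/
theorem connected_cograph_retract_cocomponents {α β : Type*} [Fintype α] [Fintype β]
    (G : SimpleGraph α) (H : SimpleGraph β) (hG : G.IsCograph) (hH : H.IsCograph)
    (hGc : G.Connected) (h : G.IsRetract H) :
    H.Connected ∧
    ∃ P : Hᶜ.ConnectedComponent → Gᶜ.ConnectedComponent,
      Function.Surjective P ∧
      ∀ C : Gᶜ.ConnectedComponent,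
        (G.induce C.supp).IsRetract
          (H.induce {w : β | P (Hᶜ.connectedComponentMk w) = C}) :=
  connected_cograph_retract_cocomponents_general G H hGc h
end

section
/- If H is a retract of a graph G, then G and H have the same odd girth, i.e., the infimum (in ℕ∞) of the set of odd lengths of cycles in G equals the infimum of the set of odd lengths of cycles in H. -/
/-- The odd girth of a graph: the infimum in `ℕ∞` of the odd lengths of cycles. -/
noncomputable def SimpleGraph.oddGirth {α : Type*} (G : SimpleGraph α) : ℕ∞ :=
  sInf {n : ℕ∞ | ∃ (v : α) (w : G.Walk v v), w.IsCycle ∧ Odd w.length ∧ (w.length : ℕ∞) = n}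

/-!
A homomorphism maps an odd cycle to an odd closed walk of the same length, and every odd closed
walk contains an odd cycle that is no longer: if it is not a cycle, it splits at a repeated
vertex into two shorter closed walks, one of which is odd. Hence a homomorphism `G →g H` gives
`H.oddGirth ≤ G.oddGirth`, and a retraction provides homomorphisms in both directions.
-/

namespace SimpleGraph

variable {α β : Type*} {G : SimpleGraph α} {v : α}

namespace Walk

lemma exists_odd_length_lt_of_not_isCycle {w : G.Walk v v} (hodd : Odd w.length)
    (hcyc : ¬w.IsCycle) : ∃ (x : α) (w' : G.Walk x x), Odd w'.length ∧ w'.length < w.length := by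
  have hnil : ¬w.Nil := fun h => by simp [length_eq_zero_iff.mpr h] at hodd
  have hlen := length_tail_add_one hnil
  have htail : ¬w.tail.IsPath := by
    intro hpath
    have hne_one : w.length ≠ 1 := fun h => G.loopless.irrefl v (adj_of_length_eq_one h)
    obtain ⟨k, hk⟩ := hodd
    exact hcyc (isCycle_iff_isPath_tail_and_le_length.mpr ⟨hpath, by omega⟩)
  obtain ⟨x, c, hsub, hcnil⟩ : ∃ (x : α) (c : G.Walk x x), c.IsSubwalk w.tail ∧ ¬c.Nil := by
    simpa [isPath_iff_isSubwalk_imp_nil] using htail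
  have hc_lt : c.length < w.length := by have := length_le_of_isSubwalk hsub; omega
  obtain ⟨ru, rv, hw⟩ : c.IsSubwalk w := cons_tail_eq w hnil ▸ hsub.cons (w.adj_snd hnil)
  have hsplit : w.length = c.length + (ru.append rv).length := by
    rw [hw]; simp only [length_append]; omega
  have hc_pos : 0 < c.length := not_nil_iff_lt_length.mp hcnil
  rcases Nat.even_or_odd c.length with heven | hc_odd
  · refine ⟨v, ru.append rv, ?_, by omega⟩
    rw [hsplit] at hodd
    exact (Nat.odd_add'.mp hodd).mpr heven
  · exact ⟨x, c, hc_odd, hc_lt⟩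

lemma exists_isCycle_odd_length_le (w : G.Walk v v) (hodd : Odd w.length) :
    ∃ (x : α) (c : G.Walk x x), c.IsCycle ∧ Odd c.length ∧ c.length ≤ w.length := by
  induction hn : w.length using Nat.strong_induction_on generalizing v with
  | _ n ih =>
    by_cases hcyc : w.IsCycle
    · exact ⟨v, w, hcyc, hodd, hn.le⟩
    obtain ⟨x, w', hodd', hlt⟩ := exists_odd_length_lt_of_not_isCycle hodd hcyc
    obtain ⟨y, c, hc, hc_odd, hle⟩ := ih _ (hn ▸ hlt) w' hodd' rfl
    exact ⟨y, c, hc, hc_odd, by omega⟩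

end Walk

lemma oddGirth_le_length (w : G.Walk v v) (hodd : Odd w.length) : G.oddGirth ≤ w.length := by
  obtain ⟨x, c, hc, hc_odd, hle⟩ := w.exists_isCycle_odd_length_le hodd
  calc G.oddGirth ≤ c.length := sInf_le ⟨x, c, hc, hc_odd, rfl⟩
    _ ≤ w.length := by exact_mod_cast hle

lemma Hom.oddGirth_le {H : SimpleGraph β} (f : G →g H) : H.oddGirth ≤ G.oddGirth := by
  refine le_sInf ?_
  rintro _ ⟨v, w, -, hodd, rfl⟩
  rw [← Walk.length_map f w] at hodd ⊢
  exact oddGirth_le_length _ hodd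

end SimpleGraph

/-- If `H` is a retract of `G`, then `G` and `H` have the same odd girth. -/
theorem retract_oddGirth {α β : Type*} (G : SimpleGraph α) (H : SimpleGraph β)
    (h : G.IsRetract H) : G.oddGirth = H.oddGirth := by
  obtain ⟨ρ, γ, -⟩ := h
  exact le_antisymm γ.oddGirth_le ρ.oddGirth_le
end

section
/- If G is a connected cograph with at least two vertices, then the complement graph of G is disconnected. -/
namespace SimpleGraph

variable {α : Type*} {G : SimpleGraph α}

theorem isCograph_iff : G.IsCograph ↔ ∀ ⦃a b c d⦄, G.Adj a b → G.Adj b c → G.Adj c d →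
    ¬G.Adj a c → ¬G.Adj a d → ¬G.Adj b d → False := by
  refine ⟨fun hG a b c d hab hbc hcd hac had hbd => hG.false ⟨⟨![a, b, c, d], ?_⟩, ?_⟩,
    fun h => ⟨fun f => ?_⟩⟩
  · have hac' : a ≠ c := by rintro rfl; exact had hcd
    have had' : a ≠ d := by rintro rfl; exact hac hcd.symm
    have hbd' : b ≠ d := by rintro rfl; exact had hab
    intro i j hij
    fin_cases i <;> fin_cases j <;>
      simp_all [hab.ne, hbc.ne, hcd.ne, hab.ne', hbc.ne', hcd.ne', hac'.symm, had'.symm, hbd'.symm]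
  · have hca := mt G.adj_symm hac
    have hda := mt G.adj_symm had
    have hdb := mt G.adj_symm hbd
    intro i j
    show G.Adj (![a, b, c, d] i) (![a, b, c, d] j) ↔ _
    fin_cases i <;> fin_cases j <;>
      simp [pathGraph_adj, hab, hbc, hcd, hac, had, hbd, hab.symm, hbc.symm, hcd.symm, hca, hda, hdb]
  · have hf (i j : Fin 4) : G.Adj (f i) (f j) ↔ (i : ℕ) + 1 = j ∨ (j : ℕ) + 1 = i :=
      f.map_adj_iff.trans pathGraph_adj
    exact h ((hf 0 1).2 (by decide)) ((hf 1 2).2 (by decide)) ((hf 2 3).2 (by decide))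
      ((hf 0 2).not.2 (by decide)) ((hf 0 3).not.2 (by decide)) ((hf 1 3).not.2 (by decide))

theorem IsCograph.compl_s19 (hG : G.IsCograph) : Gᶜ.IsCograph := by
  -- the complement of the path `a - b - c - d` is the path `c - a - d - b`
  rw [isCograph_iff] at hG ⊢
  intro a b c d hab hbc hcd hac had hbd
  simp only [compl_adj, not_and, not_not] at *
  have hac' : a ≠ c := by rintro rfl; exact hcd.2 (had hcd.1)
  have had' : a ≠ d := by rintro rfl; exact hcd.2 (hac hcd.1.symm).symm
  have hbd' : b ≠ d := by rintro rfl; exact hab.2 (had hab.1)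
  exact hG (hac hac').symm (had had') (hbd hbd').symm hcd.2 (fun h => hbc.2 h.symm) hab.2

structure IsJoinSplit (G : SimpleGraph α) (s A B : Set α) : Prop where
  left_nonempty : A.Nonempty
  right_nonempty : B.Nonempty
  union_eq : A ∪ B = s
  isCompleteBetween : G.IsCompleteBetween A B

theorem isJoinSplit_pair {x y : α} (hxy : x ≠ y) :
    G.IsJoinSplit {x, y} {x} {y} ∨ Gᶜ.IsJoinSplit {x, y} {x} {y} := by
  have hsplit (H : SimpleGraph α) (h : H.Adj x y) : H.IsJoinSplit {x, y} {x} {y} :=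
    ⟨Set.singleton_nonempty x, Set.singleton_nonempty y, Set.singleton_union, by
      rintro _ rfl _ rfl; exact h⟩
  by_cases h : G.Adj x y
  · exact .inl (hsplit G h)
  · exact .inr (hsplit Gᶜ ⟨hxy, h⟩)

theorem IsCograph.exists_isJoinSplit_insert (hG : G.IsCograph)
    {s A B : Set α} (h : G.IsJoinSplit s A B) {v : α} (hv : v ∉ s) :
    ∃ C D, G.IsJoinSplit (insert v s) C D ∨ Gᶜ.IsJoinSplit (insert v s) C D := by
  obtain ⟨hA, hB, rfl, hAB⟩ := h
  by_cases hvA : ∀ a ∈ A, G.Adj v a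
  · refine ⟨A, insert v B, .inl ⟨hA, Set.insert_nonempty v B, Set.union_insert, ?_⟩⟩
    rintro x hx y (rfl | hy)
    exacts [(hvA x hx).symm, hAB hx hy]
  by_cases hvB : ∀ b ∈ B, G.Adj v b
  · refine ⟨insert v A, B, .inl ⟨Set.insert_nonempty v A, hB, Set.insert_union, ?_⟩⟩
    rintro x (rfl | hx) y hy
    exacts [hvB y hy, hAB hx hy]
  by_cases hvs : ∀ x ∈ A ∪ B, ¬G.Adj v x
  · refine ⟨{v}, A ∪ B, .inr ⟨Set.singleton_nonempty v, hA.mono Set.subset_union_left,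
      Set.singleton_union, ?_⟩⟩
    rintro x rfl y hy
    exact ⟨fun hxy => hv (hxy ▸ hy), hvs y hy⟩
  push Not at hvA hvB hvs
  obtain ⟨a, ha, hva⟩ := hvA
  obtain ⟨b, hb, hvb⟩ := hvB
  obtain ⟨w, hw, hvw⟩ := hvs
  have hnoP4 := isCograph_iff.mp hG
  have hsame (x y : α) (hx : ¬G.Adj v x) (hy : G.Adj v y)
      (hxy : x ∈ A ∧ y ∈ A ∨ x ∈ B ∧ y ∈ B) : G.Adj x y := by
    by_contra hn
    -- otherwise `x - b - y - v` (or `x - a - y - v`) is an induced `P₄`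
    rcases hxy with ⟨hxA, hyA⟩ | ⟨hxB, hyB⟩
    · exact hnoP4 (hAB hxA hb) (hAB hyA hb).symm hy.symm hn (mt G.adj_symm hx) (mt G.adj_symm hvb)
    · exact hnoP4 (hAB ha hxB).symm (hAB ha hyB) hy.symm hn (mt G.adj_symm hx) (mt G.adj_symm hva)
  refine ⟨insert v ((A ∪ B) \ G.neighborSet v), (A ∪ B) ∩ G.neighborSet v,
    .inl ⟨Set.insert_nonempty _ _, ⟨w, hw, hvw⟩, ?_, ?_⟩⟩
  · rw [Set.insert_union, Set.sdiff_union_inter]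
  · rintro x (rfl | ⟨hx, hvx⟩) y ⟨hy, hvy⟩
    · exact hvy
    rcases hx with hx | hx <;> rcases hy with hy | hy
    exacts [hsame x y hvx hvy (.inl ⟨hx, hy⟩), hAB hx hy, (hAB hy hx).symm,
      hsame x y hvx hvy (.inr ⟨hx, hy⟩)]

theorem IsCograph.exists_isJoinSplit (hG : G.IsCograph) {s : Finset α} (hs : 1 < s.card) :
    ∃ A B, G.IsJoinSplit s A B ∨ Gᶜ.IsJoinSplit s A B := by
  classical
  induction s using Finset.induction_on with
  | empty => simp at hs
  | insert v t hv ih =>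
    rw [Finset.card_insert_of_notMem hv] at hs
    rw [Finset.coe_insert]
    obtain ht | ht := (by omega : t.card = 1 ∨ 1 < t.card)
    · obtain ⟨u, rfl⟩ := Finset.card_eq_one.mp ht
      rw [Finset.coe_singleton]
      exact ⟨{v}, {u}, isJoinSplit_pair (Finset.notMem_singleton.mp hv)⟩
    obtain ⟨A, B, h | h⟩ := ih ht
    · exact hG.exists_isJoinSplit_insert h hv
    · obtain ⟨C, D, h'⟩ := hG.compl_s19.exists_isJoinSplit_insert h hv
      rw [compl_compl] at h'
      exact ⟨C, D, h'.symm⟩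

theorem IsJoinSplit.not_preconnected_compl {A B : Set α} (h : G.IsJoinSplit Set.univ A B) :
    ¬Gᶜ.Preconnected := by
  obtain ⟨⟨a, ha⟩, ⟨b, hb⟩, hAB, hcomplete⟩ := h
  intro hpre
  obtain ⟨p⟩ := hpre a b
  obtain ⟨d, -, hfst, hsnd⟩ :=
    p.exists_boundary_dart A ha (Set.disjoint_right.mp hcomplete.disjoint hb)
  have hdB : d.snd ∈ B := (hAB ▸ Set.mem_univ d.snd).resolve_left hsnd
  exact d.adj.2 (hcomplete hfst hdB)

end SimpleGraph

/-- If `G` is a connected cograph with at least two vertices, then the complement of `G`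
is disconnected. -/
theorem connected_cograph_complement_disconnected {α : Type*} [Fintype α]
    (G : SimpleGraph α) (hG : G.IsCograph) (hc : G.Connected) (h2 : 1 < Fintype.card α) :
    ¬ Gᶜ.Connected := by
  obtain ⟨A, B, h⟩ := hG.exists_isJoinSplit (s := Finset.univ) (by rwa [Finset.card_univ])
  rw [Finset.coe_univ] at h
  rcases h with h | h
  · exact fun hc' => h.not_preconnected_compl hc'.preconnected
  · exact absurd (by simpa using hc.preconnected) h.not_preconnected_compl
end
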